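/- Let λ, μ ∈ ℂ and q, a, c, d ∈ ℂ, and let ω be a primitive cube root of unity. The four quadratic forms Q₁, Q₂, Q₃, Q₄ vanish identically on the plane W(q,a,c,d) (equivalently, the line in ℙ⁷ parametrized by (s+at : qs+t : ωs+at : ωqs+t : ω²s+at : ω²qs+t : ct : dt) lies on X_{λ,μ}) if and only if q² + 2λq + 1 = 0, a(1 + λq) = −(λ + q), 2μcd = 3a² + 3, and c² + d² + 2a² − 2λa + 2 = 0. -/
import Mathlib


noncomputable section

/-- `Q₁ = x₀²+x₁²+x₂²+x₃²+x₄²+x₅² − 2μx₆x₇`. -/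
def Q1 (m : ℂ) (x : Fin 8 → ℂ) : ℂ :=
  x 0 ^ 2 + x 1 ^ 2 + x 2 ^ 2 + x 3 ^ 2 + x 4 ^ 2 + x 5 ^ 2 - 2 * m * x 6 * x 7

/-- `Q₂ = x₀²+x₁²+x₂²+x₃²+x₆²+x₇² − 2λx₄x₅`. -/
def Q2 (l : ℂ) (x : Fin 8 → ℂ) : ℂ :=
  x 0 ^ 2 + x 1 ^ 2 + x 2 ^ 2 + x 3 ^ 2 + x 6 ^ 2 + x 7 ^ 2 - 2 * l * x 4 * x 5

/-- `Q₃ = x₀²+x₁²+x₄²+x₅²+x₆²+x₇² − 2λx₂x₃`. -/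
def Q3 (l : ℂ) (x : Fin 8 → ℂ) : ℂ :=
  x 0 ^ 2 + x 1 ^ 2 + x 4 ^ 2 + x 5 ^ 2 + x 6 ^ 2 + x 7 ^ 2 - 2 * l * x 2 * x 3

/-- `Q₄ = x₂²+x₃²+x₄²+x₅²+x₆²+x₇² − 2λx₀x₁`. -/
def Q4 (l : ℂ) (x : Fin 8 → ℂ) : ℂ :=
  x 2 ^ 2 + x 3 ^ 2 + x 4 ^ 2 + x 5 ^ 2 + x 6 ^ 2 + x 7 ^ 2 - 2 * l * x 0 * x 1

/-- The plane `W(q,a,c,d) ⊆ ℂ⁸` spanned by `u = (1,q,ω,ωq,ω²,ω²q,0,0)` and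
`v = (a,1,a,1,a,1,c,d)`, for `ω` a primitive cube root of unity. -/
def linePlane8 (w q a c d : ℂ) : Submodule ℂ (Fin 8 → ℂ) :=
  Submodule.span ℂ
    {![1, q, w, w * q, w ^ 2, w ^ 2 * q, 0, 0], ![a, 1, a, 1, a, 1, c, d]}

/-- The system of equations characterizing the 8 lines of Lemma 4.1. -/
def lineEqs8 (l m q a c d : ℂ) : Prop :=
  q ^ 2 + 2 * l * q + 1 = 0 ∧ a * (1 + l * q) = -(l + q) ∧
    2 * m * c * d = 3 * a ^ 2 + 3 ∧ c ^ 2 + d ^ 2 + 2 * a ^ 2 - 2 * l * a + 2 = 0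

theorem stmt_12 (l m : ℂ) (w : ℂ) (hw : IsPrimitiveRoot w 3) (q a c d : ℂ) :
    (∀ x ∈ linePlane8 w q a c d,
        Q1 m x = 0 ∧ Q2 l x = 0 ∧ Q3 l x = 0 ∧ Q4 l x = 0) ↔
      lineEqs8 l m q a c d := by
  have h3 : w ^ 3 = 1 := hw.pow_eq_one
  have hne : w ≠ 1 := hw.ne_one (by norm_num)
  have hH : w ^ 2 + w + 1 = 0 := by
    have h0 : (w - 1) * (w ^ 2 + w + 1) = 0 := by linear_combination h3
    rcases mul_eq_zero.mp h0 with h | h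
    · exact absurd (sub_eq_zero.mp h) hne
    · exact h
  set u : Fin 8 → ℂ := ![1, q, w, w * q, w ^ 2, w ^ 2 * q, 0, 0] with hu_def
  set v : Fin 8 → ℂ := ![a, 1, a, 1, a, 1, c, d] with hv_def
  constructor
  · intro h
    have hu : u ∈ linePlane8 w q a c d := Submodule.subset_span (Set.mem_insert _ _)
    have hv : v ∈ linePlane8 w q a c d := Submodule.subset_span (Set.mem_insert_of_mem _ rfl)
    have huv : u + v ∈ linePlane8 w q a c d := Submodule.add_mem _ hu hv
    have hQ4u : w ^ 2 + (w * q) ^ 2 + (w ^ 2) ^ 2 + (w ^ 2 * q) ^ 2 + 0 ^ 2 + 0 ^ 2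
        - 2 * l * 1 * q = 0 := (h u hu).2.2.2
    have hQ1v : a ^ 2 + 1 ^ 2 + a ^ 2 + 1 ^ 2 + a ^ 2 + 1 ^ 2 - 2 * m * c * d = 0 :=
      (h v hv).1
    have hQ2v : a ^ 2 + 1 ^ 2 + a ^ 2 + 1 ^ 2 + c ^ 2 + d ^ 2 - 2 * l * a * 1 = 0 :=
      (h v hv).2.1
    have hQ4uv : (w + a) ^ 2 + (w * q + 1) ^ 2 + (w ^ 2 + a) ^ 2 + (w ^ 2 * q + 1) ^ 2
        + (0 + c) ^ 2 + (0 + d) ^ 2 - 2 * l * (1 + a) * (q + 1) = 0 :=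
      (h (u + v) huv).2.2.2
    have hE1 : q ^ 2 + 2 * l * q + 1 = 0 := by
      linear_combination -hQ4u + (1 + q ^ 2) * (w ^ 2 - w + 1) * hH
    have hE3 : 2 * m * c * d = 3 * a ^ 2 + 3 := by linear_combination -hQ1v
    have hE4 : c ^ 2 + d ^ 2 + 2 * a ^ 2 - 2 * l * a + 2 = 0 := by linear_combination hQ2v
    have hE2 : a * (1 + l * q) = -(l + q) := by
      linear_combination (-1/2 : ℂ) * hQ4uv + (-1/2 : ℂ) * hE1 + (1/2 : ℂ) * hE4
        + (1/2 : ℂ) * ((1 + q ^ 2) * (w ^ 2 - w + 1) + 2 * (a + q)) * hH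
    exact ⟨hE1, hE2, hE3, hE4⟩
  · rintro ⟨e1, e2, e3, e4⟩ x hx
    rw [linePlane8, Submodule.mem_span_pair] at hx
    obtain ⟨s, t, rfl⟩ := hx
    refine ⟨?_, ?_, ?_, ?_⟩
    · show (s * 1 + t * a) ^ 2 + (s * q + t * 1) ^ 2 + (s * w + t * a) ^ 2
        + (s * (w * q) + t * 1) ^ 2 + (s * w ^ 2 + t * a) ^ 2 + (s * (w ^ 2 * q) + t * 1) ^ 2
        - 2 * m * (s * 0 + t * c) * (s * 0 + t * d) = 0
      linear_combination (s ^ 2 * (1 + q ^ 2) * (w ^ 2 - w + 1) + 2 * s * t * (a + q)) * hH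
        - t ^ 2 * e3
    · show (s * 1 + t * a) ^ 2 + (s * q + t * 1) ^ 2 + (s * w + t * a) ^ 2
        + (s * (w * q) + t * 1) ^ 2 + (s * 0 + t * c) ^ 2 + (s * 0 + t * d) ^ 2
        - 2 * l * (s * w ^ 2 + t * a) * (s * (w ^ 2 * q) + t * 1) = 0
      linear_combination (-(s ^ 2) * w) * e1 + (-2 * s * t * w ^ 2) * e2 + t ^ 2 * e4
        + (s ^ 2 * ((1 + q ^ 2) - 2 * l * q * w * (w - 1)) + 2 * s * t * (a + q)) * hH
    · show (s * 1 + t * a) ^ 2 + (s * q + t * 1) ^ 2 + (s * w ^ 2 + t * a) ^ 2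
        + (s * (w ^ 2 * q) + t * 1) ^ 2 + (s * 0 + t * c) ^ 2 + (s * 0 + t * d) ^ 2
        - 2 * l * (s * w + t * a) * (s * (w * q) + t * 1) = 0
      linear_combination (-(s ^ 2) * w ^ 2) * e1 + (-2 * s * t * w) * e2 + t ^ 2 * e4
        + (s ^ 2 * (1 + q ^ 2) * (w ^ 2 - w + 1) + 2 * s * t * (a + q)) * hH
    · show (s * w + t * a) ^ 2 + (s * (w * q) + t * 1) ^ 2 + (s * w ^ 2 + t * a) ^ 2
        + (s * (w ^ 2 * q) + t * 1) ^ 2 + (s * 0 + t * c) ^ 2 + (s * 0 + t * d) ^ 2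
        - 2 * l * (s * 1 + t * a) * (s * q + t * 1) = 0
      linear_combination (-(s ^ 2)) * e1 + (-2 * s * t) * e2 + t ^ 2 * e4
        + (s ^ 2 * (1 + q ^ 2) * (w ^ 2 - w + 1) + 2 * s * t * (a + q)) * hH
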